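/- arXiv:1903.07807 — 3 statements merged into one kernel-verified Lean document; each statement's English description precedes it below -/
import Mathlib

section
/- Let f_i(ξ) = ½(z_i − H̄_i ξ)ᵀ S_i⁻¹ (z_i − H̄_i ξ) for i = 1,…,N, where each H̄_i = [H_i; I], S_i = diag(R_i, N·P) with R_i and P symmetric positive definite, and z_i = [y_i; x̂]. Then the unique minimizer of F(ξ) = Σᵢ f_i(ξ) over ξ ∈ ℝⁿ equals x̂ + K(y − Hx̂), where H = [H₁; …; H_N], y = [y₁; …; y_N], R = diag(R₁,…,R_N), and K = (P⁻¹ + HᵀR⁻¹H)⁻¹HᵀR⁻¹. -/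
/-!
Everything reduces to the centralized cost `J(ζ) = ‖y − Hζ‖²_{R⁻¹} + ‖x̂ − ζ‖²_{P⁻¹}`: up to the
factor `½`, the local cost `fᵢ` is `‖yᵢ − Hᵢζ‖²_{Rᵢ⁻¹} + N⁻¹‖x̂ − ζ‖²_{P⁻¹}`, so the `N` prior terms
add up to one, while the measurement terms add up to `‖y − Hζ‖²_{R⁻¹}` because `R⁻¹` is block
diagonal. Expanding `J` around `x = x̂ + K(y − Hx̂)` gives
`J(x + d) = J(x) − 2 dᵀ(HᵀR⁻¹(y − Hx) + P⁻¹(x̂ − x)) + dᵀMd` with `M = P⁻¹ + HᵀR⁻¹H`;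
the linear term vanishes because `MK = HᵀR⁻¹`, and `M` is positive definite.
-/

open Matrix

namespace Matrix

variable {α ι : Type*} {m : ι → Type*} [Fintype ι] [∀ i, Fintype (m i)]

theorem dotProduct_sigma [Mul α] [AddCommMonoid α] (v w : (Σ i, m i) → α) :
    v ⬝ᵥ w = ∑ i, (fun a => v ⟨i, a⟩) ⬝ᵥ fun a => w ⟨i, a⟩ :=
  Fintype.sum_sigma _

theorem blockDiagonal'_mulVec_apply [DecidableEq ι] [NonUnitalNonAssocSemiring α]
    (M : ∀ i, Matrix (m i) (m i) α) (v : (Σ i, m i) → α) (p : Σ i, m i) :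
    (blockDiagonal' M *ᵥ v) p = (M p.1 *ᵥ fun a => v ⟨p.1, a⟩) p.2 := by
  obtain ⟨i, a⟩ := p
  rw [mulVec, dotProduct_sigma, Finset.sum_eq_single i]
  · simp [mulVec, dotProduct]
  · intro j _ hj
    simp [blockDiagonal'_apply_ne _ _ _ (Ne.symm hj), dotProduct]
  · simp

theorem dotProduct_blockDiagonal'_mulVec [DecidableEq ι] [NonUnitalNonAssocSemiring α]
    (M : ∀ i, Matrix (m i) (m i) α) (v w : (Σ i, m i) → α) :
    v ⬝ᵥ blockDiagonal' M *ᵥ w = ∑ i, (fun a => v ⟨i, a⟩) ⬝ᵥ M i *ᵥ fun a => w ⟨i, a⟩ := by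
  rw [dotProduct_sigma]
  simp only [blockDiagonal'_mulVec_apply]

theorem PosDef.blockDiagonal' [DecidableEq ι] {R : Type*} [CommRing R] [PartialOrder R]
    [StarRing R] [IsOrderedCancelAddMonoid R] {M : ∀ i, Matrix (m i) (m i) R}
    (hM : ∀ i, (M i).PosDef) : (blockDiagonal' M).PosDef := by
  refine PosDef.of_dotProduct_mulVec_pos
    (isHermitian_blockDiagonal'_iff.mpr fun i => (hM i).isHermitian) fun x hx => ?_
  obtain ⟨p, hp⟩ := Function.ne_iff.mp hx
  rw [dotProduct_blockDiagonal'_mulVec]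
  refine Finset.sum_pos' (fun i _ => (hM i).posSemidef.dotProduct_mulVec_nonneg _)
    ⟨p.1, Finset.mem_univ _, (hM p.1).dotProduct_mulVec_pos fun h => hp ?_⟩
  simpa using congrFun h p.2

theorem inv_blockDiagonal' [DecidableEq ι] [∀ i, DecidableEq (m i)] [CommRing α]
    {M : ∀ i, Matrix (m i) (m i) α} (hM : ∀ i, IsUnit (M i)) :
    (blockDiagonal' M)⁻¹ = blockDiagonal' fun i => (M i)⁻¹ := by
  refine inv_eq_right_inv ?_
  simp only [← blockDiagonal'_mul,
    fun i => mul_nonsing_inv (M i) ((isUnit_iff_isUnit_det _).mp (hM i))]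
  exact blockDiagonal'_one

theorem IsSymm.dotProduct_mulVec_comm {m : Type*} [Fintype m] [CommSemiring α]
    {W : Matrix m m α} (hW : W.IsSymm) (u v : m → α) : u ⬝ᵥ W *ᵥ v = v ⬝ᵥ W *ᵥ u := by
  rw [dotProduct_mulVec, ← mulVec_transpose, hW.eq, dotProduct_comm]

theorem PosDef.add_transpose_mul_mul_same {m n : Type*} [Fintype m] [Fintype n]
    {V : Matrix n n ℝ} {W : Matrix m m ℝ} (hV : V.PosDef) (hW : W.PosSemidef) (H : Matrix m n ℝ) :
    (V + Hᵀ * W * H).PosDef :=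
  hV.add_posSemidef (by simpa using hW.conjTranspose_mul_mul_same H)

end Matrix

section KalmanCost

variable {α m n : Type*} [Fintype m] [Fintype n]

theorem dotProduct_sub_mulVec_sub [CommRing α] {W : Matrix m m α} (hW : W.IsSymm) (r s : m → α) :
    (r - s) ⬝ᵥ W *ᵥ (r - s) = r ⬝ᵥ W *ᵥ r - 2 * (s ⬝ᵥ W *ᵥ r) + s ⬝ᵥ W *ᵥ s := by
  simp only [mulVec_sub, dotProduct_sub, sub_dotProduct, hW.dotProduct_mulVec_comm r s]
  ring

/-- The Kalman correction cost in information form: `W` and `V` stand for `R⁻¹` and `P⁻¹`. -/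
def kalmanCost [CommRing α] (W : Matrix m m α) (V : Matrix n n α) (H : Matrix m n α)
    (y : m → α) (xh ζ : n → α) : α :=
  (y - H *ᵥ ζ) ⬝ᵥ W *ᵥ (y - H *ᵥ ζ) + (xh - ζ) ⬝ᵥ V *ᵥ (xh - ζ)

variable [CommRing α] {W : Matrix m m α} {V : Matrix n n α} {H : Matrix m n α} {y : m → α}
  {xh : n → α}

theorem kalmanCost_add (hW : W.IsSymm) (hV : V.IsSymm) (x d : n → α) :
    kalmanCost W V H y xh (x + d) = kalmanCost W V H y xh x
      - 2 * (d ⬝ᵥ (Hᵀ *ᵥ W *ᵥ (y - H *ᵥ x) + V *ᵥ (xh - x))) + d ⬝ᵥ (V + Hᵀ * W * H) *ᵥ d := by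
  have hy : y - H *ᵥ (x + d) = (y - H *ᵥ x) - H *ᵥ d := by rw [mulVec_add]; abel
  have hx : xh - (x + d) = (xh - x) - d := by abel
  have hmove : ∀ v, (H *ᵥ d) ⬝ᵥ W *ᵥ v = d ⬝ᵥ Hᵀ *ᵥ W *ᵥ v := fun v => by
    rw [dotProduct_mulVec d Hᵀ, vecMul_transpose]
  simp only [kalmanCost, hy, hx, dotProduct_sub_mulVec_sub hW, dotProduct_sub_mulVec_sub hV,
    hmove, dotProduct_add, add_mulVec, ← mulVec_mulVec]
  ring

theorem kalmanCost_gradient_eq_zero {K : Matrix n m α} (hK : (V + Hᵀ * W * H) * K = Hᵀ * W) :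
    Hᵀ *ᵥ W *ᵥ (y - H *ᵥ (xh + K *ᵥ (y - H *ᵥ xh))) + V *ᵥ (xh - (xh + K *ᵥ (y - H *ᵥ xh)))
      = 0 := by
  set e := y - H *ᵥ xh with he
  have hy : y - H *ᵥ (xh + K *ᵥ e) = e - H *ᵥ K *ᵥ e := by rw [mulVec_add, he]; abel
  have hx : xh - (xh + K *ᵥ e) = -(K *ᵥ e) := by abel
  have hKe : (V + Hᵀ * W * H) *ᵥ K *ᵥ e = Hᵀ *ᵥ W *ᵥ e := by
    rw [mulVec_mulVec, hK, mulVec_mulVec]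
  rw [hy, hx, mulVec_sub, mulVec_sub, ← hKe]
  simp only [mulVec_neg, mulVec_mulVec, Matrix.add_mul, add_mulVec, Matrix.mul_assoc]
  abel

end KalmanCost

theorem kalmanCost_lt {m n : Type*} [Fintype m] [Fintype n] [DecidableEq n]
    {W : Matrix m m ℝ} {V : Matrix n n ℝ} {H : Matrix m n ℝ} {K : Matrix n m ℝ}
    (hW : W.PosSemidef) (hV : V.PosDef) (hK : (V + Hᵀ * W * H) * K = Hᵀ * W)
    (y : m → ℝ) (xh : n → ℝ) {ξ : n → ℝ} (hξ : ξ ≠ xh + K *ᵥ (y - H *ᵥ xh)) :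
    kalmanCost W V H y xh (xh + K *ᵥ (y - H *ᵥ xh)) < kalmanCost W V H y xh ξ := by
  have hgrad := kalmanCost_gradient_eq_zero (y := y) (xh := xh) hK
  set x := xh + K *ᵥ (y - H *ᵥ xh)
  have hpos := (hV.add_transpose_mul_mul_same hW H).dotProduct_mulVec_pos (sub_ne_zero.mpr hξ)
  rw [star_trivial] at hpos
  rw [← add_sub_cancel x ξ, kalmanCost_add (isHermitian_iff_isSymm.mp hW.isHermitian)
    (isHermitian_iff_isSymm.mp hV.isHermitian) x, hgrad, dotProduct_zero]
  linarith

theorem dotProduct_fromBlocks_inv_mulVec_fromRows_one {𝕜 m n : Type*} [Field 𝕜] [Fintype m]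
    [Fintype n] [DecidableEq m] [DecidableEq n] (A : Matrix m n 𝕜) {R : Matrix m m 𝕜}
    {P : Matrix n n 𝕜} (hR : IsUnit R) (hP : IsUnit P) {c : 𝕜} (hc : c ≠ 0) (y : m → 𝕜)
    (xh ζ : n → 𝕜) :
    (Sum.elim y xh - fromRows A 1 *ᵥ ζ) ⬝ᵥ
        (fromBlocks R 0 0 (c • P))⁻¹ *ᵥ (Sum.elim y xh - fromRows A 1 *ᵥ ζ)
      = (y - A *ᵥ ζ) ⬝ᵥ R⁻¹ *ᵥ (y - A *ᵥ ζ) + c⁻¹ * ((xh - ζ) ⬝ᵥ P⁻¹ *ᵥ (xh - ζ)) := by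
  have hres : Sum.elim y xh - fromRows A 1 *ᵥ ζ = Sum.elim (y - A *ᵥ ζ) (xh - ζ) := by
    rw [fromRows_mulVec, one_mulVec, Sum.elim_sub_sub]
  have hinv : (fromBlocks R 0 0 (c • P))⁻¹ = fromBlocks R⁻¹ 0 0 (c⁻¹ • P⁻¹) := by
    have hcP : (c • P)⁻¹ = c⁻¹ • P⁻¹ :=
      inv_smul' _ (Units.mk0 c hc) ((isUnit_iff_isUnit_det P).mp hP)
    rw [inv_fromBlocks_zero₁₂_of_isUnit_iff R 0 (c • P)
      (iff_of_true hR (hP.smul (Units.mk0 c hc))), hcP]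
    simp
  rw [hres, hinv, fromBlocks_mulVec]
  simp [sumElim_dotProduct_sumElim, smul_mulVec, dotProduct_smul]

theorem sum_dotProduct_fromBlocks_inv_mulVec_eq_kalmanCost {𝕜 ι n : Type*} {m : ι → Type*}
    [Field 𝕜] [Fintype ι] [DecidableEq ι] [∀ i, Fintype (m i)]
    [∀ i, DecidableEq (m i)] [Fintype n] [DecidableEq n] (Hl : ∀ i, Matrix (m i) n 𝕜)
    {Rl : ∀ i, Matrix (m i) (m i) 𝕜} (hRl : ∀ i, IsUnit (Rl i)) {P : Matrix n n 𝕜}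
    (hP : IsUnit P) (hι : (Fintype.card ι : 𝕜) ≠ 0) (yl : ∀ i, m i → 𝕜) (xh ζ : n → 𝕜) :
    ∑ i, (Sum.elim (yl i) xh - fromRows (Hl i) 1 *ᵥ ζ) ⬝ᵥ
        (fromBlocks (Rl i) 0 0 ((Fintype.card ι : 𝕜) • P))⁻¹ *ᵥ
          (Sum.elim (yl i) xh - fromRows (Hl i) 1 *ᵥ ζ)
      = kalmanCost (blockDiagonal' Rl)⁻¹ P⁻¹ (of fun p => Hl p.1 p.2) (fun p => yl p.1 p.2)
          xh ζ := by
  simp only [dotProduct_fromBlocks_inv_mulVec_fromRows_one _ (hRl _) hP hι,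
    Finset.sum_add_distrib, Finset.sum_const, Finset.card_univ, nsmul_eq_mul,
    mul_inv_cancel_left₀ hι, kalmanCost, inv_blockDiagonal' hRl, dotProduct_blockDiagonal'_mulVec]
  rfl

/-- Splitting the centralized Kalman correction cost into `N` local costs
`fᵢ(ξ) = ½(zᵢ − H̄ᵢξ)ᵀSᵢ⁻¹(zᵢ − H̄ᵢξ)` with `H̄ᵢ = [Hᵢ; I]`, `Sᵢ = diag(Rᵢ, N·P)`,
`zᵢ = [yᵢ; x̂]`: the unique minimizer of `Σᵢ fᵢ(ξ)` equals the centralized Kalman update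
`x̂ + K(y − Hx̂)` with `K = (P⁻¹ + HᵀR⁻¹H)⁻¹HᵀR⁻¹`. -/
theorem sum_local_costs_minimizer_eq_centralized_kalman {N n : ℕ} (hN : 0 < N)
    (m : Fin N → ℕ)
    (Hl : ∀ i, Matrix (Fin (m i)) (Fin n) ℝ)
    (Rl : ∀ i, Matrix (Fin (m i)) (Fin (m i)) ℝ) (hRl : ∀ i, (Rl i).PosDef)
    (P : Matrix (Fin n) (Fin n) ℝ) (hP : P.PosDef)
    (yl : ∀ i, Fin (m i) → ℝ) (xh : Fin n → ℝ)
    (f : Fin N → (Fin n → ℝ) → ℝ)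
    (hf : ∀ i ξ, f i ξ =
      (1 / 2) * ((Sum.elim (yl i) xh - (Matrix.fromRows (Hl i) (1 : Matrix (Fin n) (Fin n) ℝ)) *ᵥ ξ) ⬝ᵥ
        ((Matrix.fromBlocks (Rl i) 0 0 ((N : ℝ) • P))⁻¹ *ᵥ
          (Sum.elim (yl i) xh - (Matrix.fromRows (Hl i) (1 : Matrix (Fin n) (Fin n) ℝ)) *ᵥ ξ))))
    (H : Matrix ((i : Fin N) × Fin (m i)) (Fin n) ℝ)
    (hH : ∀ p k, H p k = Hl p.1 p.2 k)
    (R : Matrix ((i : Fin N) × Fin (m i)) ((i : Fin N) × Fin (m i)) ℝ)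
    (hR : R = Matrix.blockDiagonal' Rl)
    (y : (i : Fin N) × Fin (m i) → ℝ) (hy : ∀ p, y p = yl p.1 p.2)
    (K : Matrix (Fin n) ((i : Fin N) × Fin (m i)) ℝ)
    (hK : K = (P⁻¹ + Hᵀ * R⁻¹ * H)⁻¹ * Hᵀ * R⁻¹) :
    ∀ ξ : Fin n → ℝ, ξ ≠ xh + K *ᵥ (y - H *ᵥ xh) →
      (∑ i, f i (xh + K *ᵥ (y - H *ᵥ xh))) < ∑ i, f i ξ := by
  intro ξ hξ
  have hH' : H = of fun p => Hl p.1 p.2 := ext hH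
  have hy' : y = fun p => yl p.1 p.2 := funext hy
  have hcost : ∀ ζ, ∑ i, f i ζ = 1 / 2 * kalmanCost R⁻¹ P⁻¹ H y xh ζ := fun ζ => by
    have hN' : ((Fintype.card (Fin N) : ℕ) : ℝ) ≠ 0 := by simp [hN.ne']
    simp only [hf, ← Finset.mul_sum, hR, hH', hy', Fintype.card_fin,
      ← sum_dotProduct_fromBlocks_inv_mulVec_eq_kalmanCost Hl (fun i => (hRl i).isUnit)
        hP.isUnit hN']
  have hRpd : R.PosDef := hR ▸ PosDef.blockDiagonal' hRl
  have hM := hP.inv.add_transpose_mul_mul_same hRpd.inv.posSemidef H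
  have hMK : (P⁻¹ + Hᵀ * R⁻¹ * H) * K = Hᵀ * R⁻¹ := by
    rw [hK, Matrix.mul_assoc _ Hᵀ, mul_nonsing_inv_cancel_left _ _
      ((isUnit_iff_isUnit_det _).mp hM.isUnit)]
  rw [hcost, hcost]
  gcongr
  exact kalmanCost_lt hRpd.inv.posSemidef hP.inv hMK y xh hξ
end

section
/- Let L be the Laplacian of a connected undirected graph on N vertices with maximum eigenvalue σ_N, let M = diag(M₁, …, M_N) with each Mᵢ an n×n symmetric positive definite matrix, and let à = (L ⊗ Iₙ) M⁻¹ (L ⊗ Iₙ). Then à is symmetric positive semidefinite, ker(Ã) = {1_N ⊗ v : v ∈ ℝⁿ} (so zero is an eigenvalue of multiplicity exactly n), and σ_max(Ã) ≤ σ_N² · maxᵢ ‖Mᵢ⁻¹‖. -/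
/-!
With `K = L ⊗ Iₙ` (symmetric, since `L` is) and `P = M⁻¹` (positive definite, block by block),
`Ã = Kᵀ P K`, so `Ã` is positive semidefinite and `ker Ã = ker K`. Now `K` acts on each coordinate
slice `x(·, j)` as `L`, and `ker L` consists of the constant vectors because
`2 xᵀ L x = ∑ᵢⱼ aᵢⱼ (xᵢ - xⱼ)²` and the graph is connected. For the bound,
`xᵀ Ã x = (Kx)ᵀ P (Kx) ≤ mB ‖Kx‖²`, and `‖Lx‖² ≤ σ_N² ‖x‖²` comes from Cauchy–Schwarz for the
semi-inner product of `L`: `‖Lx‖⁴ = (xᵀ L (Lx))² ≤ (xᵀ L x) ((Lx)ᵀ L (Lx))`.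
-/

open Matrix Kronecker

section Laplacian

variable {ι : Type*} [Fintype ι] [DecidableEq ι]

def weightedLaplacian (a : Matrix ι ι ℝ) : Matrix ι ι ℝ :=
  diagonal (fun i => ∑ j, a i j) - a

theorem eq_weightedLaplacian {a L : Matrix ι ι ℝ} (hdiag : ∀ i, a i i = 0)
    (hL : ∀ i j, L i j = if i = j then ∑ k, a i k else -(a i j)) :
    L = weightedLaplacian a := by
  ext i j
  rcases eq_or_ne i j with rfl | h
  · simp [hL, weightedLaplacian, hdiag]
  · simp [hL, weightedLaplacian, h]

theorem weightedLaplacian_mulVec_apply (a : Matrix ι ι ℝ) (x : ι → ℝ) (i : ι) :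
    (weightedLaplacian a *ᵥ x) i = ∑ j, a i j * (x i - x j) := by
  simp only [weightedLaplacian, sub_mulVec, Pi.sub_apply, mulVec_diagonal, Finset.sum_mul,
    mul_sub, Finset.sum_sub_distrib]
  rfl

theorem weightedLaplacian_mulVec_const (a : Matrix ι ι ℝ) (c : ℝ) :
    weightedLaplacian a *ᵥ (fun _ => c) = 0 := by
  ext i
  simp [weightedLaplacian_mulVec_apply]

variable {a : Matrix ι ι ℝ}

theorem weightedLaplacian_isSymm (ha : a.IsSymm) : (weightedLaplacian a).IsSymm := by
  rw [IsSymm, weightedLaplacian, transpose_sub, diagonal_transpose, ha.eq]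

theorem two_mul_dotProduct_weightedLaplacian_mulVec (ha : a.IsSymm) (x : ι → ℝ) :
    2 * (x ⬝ᵥ (weightedLaplacian a *ᵥ x)) = ∑ i, ∑ j, a i j * (x i - x j) ^ 2 := by
  have hquad : x ⬝ᵥ (weightedLaplacian a *ᵥ x) = ∑ i, ∑ j, x i * (a i j * (x i - x j)) := by
    simp only [dotProduct, weightedLaplacian_mulVec_apply, Finset.mul_sum]
  have hswap : ∑ i, ∑ j, x j * (a i j * (x j - x i)) = ∑ i, ∑ j, x i * (a i j * (x i - x j)) := by
    rw [Finset.sum_comm]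
    simp only [ha.apply]
  calc 2 * (x ⬝ᵥ (weightedLaplacian a *ᵥ x))
      = ∑ i, ∑ j, x i * (a i j * (x i - x j)) + ∑ i, ∑ j, x j * (a i j * (x j - x i)) := by
        rw [hswap, hquad]; ring
    _ = ∑ i, ∑ j, a i j * (x i - x j) ^ 2 := by
        simp only [← Finset.sum_add_distrib]
        exact Fintype.sum_congr _ _ fun i => Fintype.sum_congr _ _ fun j => by ring

theorem posSemidef_weightedLaplacian (ha : a.IsSymm) (hnn : ∀ i j, 0 ≤ a i j) :
    (weightedLaplacian a).PosSemidef := by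
  refine PosSemidef.of_dotProduct_mulVec_nonneg ?_ fun x => ?_
  · exact isHermitian_iff_isSymm.mpr (weightedLaplacian_isSymm ha)
  · have h := two_mul_dotProduct_weightedLaplacian_mulVec ha x
    have : 0 ≤ ∑ i, ∑ j, a i j * (x i - x j) ^ 2 :=
      Finset.sum_nonneg fun i _ => Finset.sum_nonneg fun j _ => mul_nonneg (hnn i j) (sq_nonneg _)
    simp only [star_trivial]
    linarith

theorem weightedLaplacian_mulVec_eq_zero_iff (ha : a.IsSymm) (hnn : ∀ i j, 0 ≤ a i j)
    (hconn : ∀ i j, Relation.ReflTransGen (fun p q => 0 < a p q) i j) (x : ι → ℝ) :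
    weightedLaplacian a *ᵥ x = 0 ↔ ∃ c, x = fun _ => c := by
  refine ⟨fun hx => ?_, fun ⟨c, hc⟩ => hc ▸ weightedLaplacian_mulVec_const a c⟩
  have hterm : ∀ i j, 0 ≤ a i j * (x i - x j) ^ 2 := fun i j => mul_nonneg (hnn i j) (sq_nonneg _)
  have hsum : ∑ i, ∑ j, a i j * (x i - x j) ^ 2 = 0 := by
    rw [← two_mul_dotProduct_weightedLaplacian_mulVec ha, hx, dotProduct_zero, mul_zero]
  have hedge : ∀ i j, 0 < a i j → x i = x j := by
    intro i j hij
    have hrow := (Fintype.sum_eq_zero_iff_of_nonneg fun i =>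
      Finset.sum_nonneg fun j _ => hterm i j).mp hsum
    have hij0 := congrFun ((Fintype.sum_eq_zero_iff_of_nonneg (hterm i)).mp (congrFun hrow i)) j
    simpa [hij.ne', sub_eq_zero] using hij0
  have hconst : ∀ i j, x i = x j := fun i j => by
    induction hconn i j with
    | refl => rfl
    | tail _ hbc ih => exact ih.trans (hedge _ _ hbc)
  cases isEmpty_or_nonempty ι with
  | inl => exact ⟨0, Subsingleton.elim _ _⟩
  | inr h => exact ⟨x h.some, funext fun i => hconst i h.some⟩

end Laplacian

namespace Matrix

section QuadraticForm

variable {ι κ : Type*} [Fintype ι] [Fintype κ]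

theorem dotProduct_self_nonneg (x : ι → ℝ) : 0 ≤ x ⬝ᵥ x := by
  simpa using dotProduct_self_star_nonneg x

theorem dotProduct_submatrix_mulVec_equiv {R : Type*} [CommSemiring R]
    (A : Matrix ι ι R) (e : κ ≃ ι) (x : κ → R) :
    x ⬝ᵥ (A.submatrix e e *ᵥ x) = (x ∘ e.symm) ⬝ᵥ (A *ᵥ (x ∘ e.symm)) := by
  rw [submatrix_mulVec_equiv, ← comp_equiv_symm_dotProduct]

theorem dotProduct_submatrix_mulVec_le {A : Matrix ι ι ℝ} {c : ℝ}
    (hA : ∀ y, y ⬝ᵥ (A *ᵥ y) ≤ c * (y ⬝ᵥ y)) (e : κ ≃ ι) (x : κ → ℝ) :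
    x ⬝ᵥ (A.submatrix e e *ᵥ x) ≤ c * (x ⬝ᵥ x) := by
  rw [dotProduct_submatrix_mulVec_equiv]
  simpa only [comp_equiv_symm_dotProduct, Function.comp_assoc, Equiv.symm_comp_self,
    Function.comp_id] using hA (x ∘ e.symm)

theorem PosSemidef.nonneg_of_dotProduct_mulVec_le [Nonempty ι] {A : Matrix ι ι ℝ} {c : ℝ}
    (hA : A.PosSemidef) (h : ∀ x, x ⬝ᵥ (A *ᵥ x) ≤ c * (x ⬝ᵥ x)) : 0 ≤ c := by
  have hone : (0 : ℝ) < (fun _ : ι => (1 : ℝ)) ⬝ᵥ (fun _ => 1) := by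
    simp [dotProduct, Fintype.card_pos]
  have hA1 : 0 ≤ (fun _ : ι => (1 : ℝ)) ⬝ᵥ (A *ᵥ fun _ => 1) := by
    simpa only [star_trivial] using hA.dotProduct_mulVec_nonneg fun _ => 1
  exact nonneg_of_mul_nonneg_left (hA1.trans (h _)) hone

theorem PosSemidef.sq_dotProduct_mulVec_le {A : Matrix ι ι ℝ} (hA : A.PosSemidef) (x y : ι → ℝ) :
    (x ⬝ᵥ (A *ᵥ y)) ^ 2 ≤ (x ⬝ᵥ (A *ᵥ x)) * (y ⬝ᵥ (A *ᵥ y)) := by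
  let _ := A.toSeminormedAddCommGroup hA
  let _ := A.toInnerProductSpace hA
  have h := real_inner_mul_inner_self_le x y
  -- the inner product of `A.toInnerProductSpace hA` is `⟪x, y⟫ = (A *ᵥ y) ⬝ᵥ x`
  change ((A *ᵥ y) ⬝ᵥ x) * ((A *ᵥ y) ⬝ᵥ x) ≤ ((A *ᵥ x) ⬝ᵥ x) * ((A *ᵥ y) ⬝ᵥ y) at h
  simpa only [dotProduct_comm _ x, dotProduct_comm _ y, sq] using h

theorem PosSemidef.mulVec_dotProduct_mulVec_self_le {A : Matrix ι ι ℝ} (hA : A.PosSemidef)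
    {σ : ℝ} (hσ : ∀ x, x ⬝ᵥ (A *ᵥ x) ≤ σ * (x ⬝ᵥ x)) (x : ι → ℝ) :
    (A *ᵥ x) ⬝ᵥ (A *ᵥ x) ≤ σ ^ 2 * (x ⬝ᵥ x) := by
  set y := A *ᵥ x
  have hx : 0 ≤ x ⬝ᵥ (A *ᵥ x) := by simpa using hA.dotProduct_mulVec_nonneg x
  have hy : 0 ≤ y ⬝ᵥ (A *ᵥ y) := by simpa using hA.dotProduct_mulVec_nonneg y
  have hcs : (y ⬝ᵥ y) ^ 2 ≤ (σ * (x ⬝ᵥ x)) * (σ * (y ⬝ᵥ y)) := calc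
    (y ⬝ᵥ y) ^ 2 = (x ⬝ᵥ (A *ᵥ y)) ^ 2 := by
      rw [dotProduct_mulVec, ← mulVec_transpose, (isHermitian_iff_isSymm.mp hA.isHermitian).eq,
        dotProduct_comm]
    _ ≤ (x ⬝ᵥ (A *ᵥ x)) * (y ⬝ᵥ (A *ᵥ y)) := hA.sq_dotProduct_mulVec_le x y
    _ ≤ (σ * (x ⬝ᵥ x)) * (σ * (y ⬝ᵥ y)) := mul_le_mul (hσ x) (hσ y) hy (hx.trans (hσ x))
  rcases (dotProduct_self_nonneg y).eq_or_lt with h0 | hpos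
  · rw [← h0]; exact mul_nonneg (sq_nonneg σ) (dotProduct_self_nonneg x)
  · nlinarith

theorem dotProduct_transpose_mul_mul_mulVec (P : Matrix κ κ ℝ) (B : Matrix κ ι ℝ) (x : ι → ℝ) :
    x ⬝ᵥ ((Bᵀ * P * B) *ᵥ x) = (B *ᵥ x) ⬝ᵥ (P *ᵥ (B *ᵥ x)) := by
  rw [← mulVec_mulVec, ← mulVec_mulVec, dotProduct_mulVec, vecMul_transpose]

theorem PosDef.transpose_mul_mul_same_mulVec_eq_zero_iff {P : Matrix κ κ ℝ} (hP : P.PosDef)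
    (B : Matrix κ ι ℝ) (x : ι → ℝ) : (Bᵀ * P * B) *ᵥ x = 0 ↔ B *ᵥ x = 0 := by
  refine ⟨fun h => ?_, fun h => by rw [← mulVec_mulVec, h, mulVec_zero]⟩
  by_contra hBx
  have hpos := hP.dotProduct_mulVec_pos hBx
  rw [star_trivial, ← dotProduct_transpose_mul_mul_mulVec, h, dotProduct_zero] at hpos
  exact hpos.false

theorem PosSemidef.dotProduct_transpose_mul_mul_mulVec_le {P B : Matrix ι ι ℝ} (hP : P.PosSemidef)
    {m s : ℝ} (hPm : ∀ y, y ⬝ᵥ (P *ᵥ y) ≤ m * (y ⬝ᵥ y))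
    (hBs : ∀ y, (B *ᵥ y) ⬝ᵥ (B *ᵥ y) ≤ s * (y ⬝ᵥ y)) (x : ι → ℝ) :
    x ⬝ᵥ ((Bᵀ * P * B) *ᵥ x) ≤ (s * m) * (x ⬝ᵥ x) := by
  cases isEmpty_or_nonempty ι with
  | inl => simp [dotProduct]
  | inr =>
    calc x ⬝ᵥ ((Bᵀ * P * B) *ᵥ x) = (B *ᵥ x) ⬝ᵥ (P *ᵥ (B *ᵥ x)) :=
          dotProduct_transpose_mul_mul_mulVec P B x
      _ ≤ m * ((B *ᵥ x) ⬝ᵥ (B *ᵥ x)) := hPm _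
      _ ≤ m * (s * (x ⬝ᵥ x)) :=
          mul_le_mul_of_nonneg_left (hBs x) (hP.nonneg_of_dotProduct_mulVec_le hPm)
      _ = (s * m) * (x ⬝ᵥ x) := by ring

end QuadraticForm

section BlockDiagonal

variable {m o R : Type*} [Fintype m] [Fintype o]

theorem dotProduct_eq_sum_dotProduct_slice [NonUnitalNonAssocSemiring R] (x y : m × o → R) :
    x ⬝ᵥ y = ∑ k, (fun i => x (i, k)) ⬝ᵥ (fun i => y (i, k)) := by
  simp only [dotProduct, Fintype.sum_prod_type]
  exact Finset.sum_comm

variable [DecidableEq o]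

theorem blockDiagonal_mulVec_slice [NonUnitalNonAssocSemiring R] (A : o → Matrix m m R)
    (x : m × o → R) (k : o) :
    (fun i => (blockDiagonal A *ᵥ x) (i, k)) = A k *ᵥ fun i => x (i, k) := by
  ext i
  simp only [mulVec, dotProduct, Fintype.sum_prod_type, blockDiagonal_apply', ite_mul, zero_mul]
  rw [Finset.sum_comm]
  simp

theorem blockDiagonal_mulVec_eq_zero_iff [NonUnitalNonAssocSemiring R] (A : o → Matrix m m R)
    (x : m × o → R) :
    blockDiagonal A *ᵥ x = 0 ↔ ∀ k, A k *ᵥ (fun i => x (i, k)) = 0 := by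
  simp only [← blockDiagonal_mulVec_slice, funext_iff, Prod.forall, Pi.zero_apply]
  exact forall_comm

theorem dotProduct_blockDiagonal_mulVec [NonUnitalNonAssocSemiring R] (A : o → Matrix m m R)
    (x : m × o → R) :
    x ⬝ᵥ (blockDiagonal A *ᵥ x) = ∑ k, (fun i => x (i, k)) ⬝ᵥ (A k *ᵥ fun i => x (i, k)) := by
  simp only [dotProduct_eq_sum_dotProduct_slice x, blockDiagonal_mulVec_slice]

theorem dotProduct_blockDiagonal_mulVec_le {A : o → Matrix m m ℝ} {c : ℝ}
    (hA : ∀ k y, y ⬝ᵥ (A k *ᵥ y) ≤ c * (y ⬝ᵥ y)) (x : m × o → ℝ) :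
    x ⬝ᵥ (blockDiagonal A *ᵥ x) ≤ c * (x ⬝ᵥ x) := by
  rw [dotProduct_blockDiagonal_mulVec, dotProduct_eq_sum_dotProduct_slice x x, Finset.mul_sum]
  exact Finset.sum_le_sum fun k _ => hA k _

theorem blockDiagonal_mulVec_dotProduct_self_le {A : o → Matrix m m ℝ} {c : ℝ}
    (hA : ∀ k y, (A k *ᵥ y) ⬝ᵥ (A k *ᵥ y) ≤ c * (y ⬝ᵥ y)) (x : m × o → ℝ) :
    (blockDiagonal A *ᵥ x) ⬝ᵥ (blockDiagonal A *ᵥ x) ≤ c * (x ⬝ᵥ x) := by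
  rw [dotProduct_eq_sum_dotProduct_slice, dotProduct_eq_sum_dotProduct_slice x x, Finset.mul_sum]
  simp only [blockDiagonal_mulVec_slice]
  exact Finset.sum_le_sum fun k _ => hA k _

theorem posDef_blockDiagonal [DecidableEq m] {A : o → Matrix m m ℝ} (hA : ∀ k, (A k).PosDef) :
    (blockDiagonal A).PosDef := by
  refine PosDef.of_dotProduct_mulVec_pos ?_ fun x hx => ?_
  · simp only [IsHermitian, blockDiagonal_conjTranspose, (hA _).isHermitian.eq]
  · obtain ⟨⟨i, k⟩, hik⟩ : ∃ p, x p ≠ 0 := Function.ne_iff.mp hx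
    simp only [star_trivial, dotProduct_blockDiagonal_mulVec]
    refine Finset.sum_pos' (fun k _ => ?_) ⟨k, Finset.mem_univ k, ?_⟩
    · simpa using (hA k).posSemidef.dotProduct_mulVec_nonneg (fun i => x (i, k))
    · simpa using (hA k).dotProduct_mulVec_pos (x := fun i => x (i, k))
        (Function.ne_iff.mpr ⟨i, hik⟩)

theorem blockDiagonal_inv [DecidableEq m] [CommRing R] {A : o → Matrix m m R}
    (hA : ∀ k, IsUnit (A k).det) : (blockDiagonal A)⁻¹ = blockDiagonal fun k => (A k)⁻¹ := by
  refine inv_eq_left_inv ?_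
  rw [← blockDiagonal_mul]
  simp_rw [nonsing_inv_mul _ (hA _)]
  exact blockDiagonal_one

-- `blockDiagonal` indexes its blocks by the second component, hence the swap of factors.
theorem inv_eq_submatrix_blockDiagonal_inv [DecidableEq m] [CommRing R] {A : o → Matrix m m R}
    (hA : ∀ k, IsUnit (A k).det) {B : Matrix (o × m) (o × m) R}
    (hB : ∀ p q, B p q = if p.1 = q.1 then A p.1 p.2 q.2 else 0) :
    B⁻¹ = (blockDiagonal fun k => (A k)⁻¹).submatrix (Equiv.prodComm _ _) (Equiv.prodComm _ _) := by
  have hB' : B = (blockDiagonal A).submatrix (Equiv.prodComm _ _) (Equiv.prodComm _ _) := by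
    ext p q
    simp [hB, blockDiagonal_apply]
  rw [hB', inv_submatrix_equiv, blockDiagonal_inv hA]

end BlockDiagonal

end Matrix

/-- For the Laplacian `L` of a connected undirected graph (max eigenvalue `σN`),
block diagonal `M = diag(M₁,…,M_N)` with `Mᵢ ≻ 0`, and `Ã = (L ⊗ Iₙ)M⁻¹(L ⊗ Iₙ)`:
`Ã` is symmetric PSD, its kernel is `{1_N ⊗ v}`, and `σ_max(Ã) ≤ σN²·maxᵢ‖Mᵢ⁻¹‖`
(stated via quadratic-form bounds). -/
theorem dual_dynamics_matrix_properties {N n : ℕ}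
    (a L : Matrix (Fin N) (Fin N) ℝ)
    (hsym : ∀ i j, a i j = a j i)
    (hnn : ∀ i j, 0 ≤ a i j)
    (hdiag : ∀ i, a i i = 0)
    (hconn : ∀ i j : Fin N, Relation.ReflTransGen (fun p q => 0 < a p q) i j)
    (hL : ∀ i j, L i j = if i = j then ∑ k, a i k else -(a i j))
    (σN : ℝ) (hσN : ∀ x : Fin N → ℝ, x ⬝ᵥ (L *ᵥ x) ≤ σN * (x ⬝ᵥ x))
    (M : Fin N → Matrix (Fin n) (Fin n) ℝ) (hM : ∀ i, (M i).PosDef)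
    (Mb : Matrix (Fin N × Fin n) (Fin N × Fin n) ℝ)
    (hMb : ∀ p q, Mb p q = if p.1 = q.1 then M p.1 p.2 q.2 else 0)
    (mB : ℝ) (hmB : ∀ (i : Fin N) (x : Fin n → ℝ), x ⬝ᵥ ((M i)⁻¹ *ᵥ x) ≤ mB * (x ⬝ᵥ x))
    (At : Matrix (Fin N × Fin n) (Fin N × Fin n) ℝ)
    (hAt : At = (L ⊗ₖ (1 : Matrix (Fin n) (Fin n) ℝ)) * Mb⁻¹ *
      (L ⊗ₖ (1 : Matrix (Fin n) (Fin n) ℝ))) :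
    At.PosSemidef ∧
    (∀ x : Fin N × Fin n → ℝ, At *ᵥ x = 0 ↔ ∃ v : Fin n → ℝ, x = fun p => v p.2) ∧
    (∀ x : Fin N × Fin n → ℝ, x ⬝ᵥ (At *ᵥ x) ≤ (σN ^ 2 * mB) * (x ⬝ᵥ x)) := by
  have ha : a.IsSymm := IsSymm.ext fun i j => hsym j i
  have hLa : L = weightedLaplacian a := eq_weightedLaplacian hdiag hL
  have hLpsd : L.PosSemidef := hLa ▸ posSemidef_weightedLaplacian ha hnn
  have hKt : (blockDiagonal fun _ : Fin n => L)ᵀ = blockDiagonal fun _ => L := by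
    rw [blockDiagonal_transpose, hLa, (weightedLaplacian_isSymm ha).eq]
  have hMbinv := inv_eq_submatrix_blockDiagonal_inv (fun i => (hM i).isUnit.map detMonoidHom) hMb
  have hPpd : (Mb⁻¹).PosDef := by
    rw [hMbinv]
    exact (posDef_blockDiagonal fun i => (hM i).inv).submatrix (Equiv.prodComm _ _).injective
  have hPm : ∀ y, y ⬝ᵥ (Mb⁻¹ *ᵥ y) ≤ mB * (y ⬝ᵥ y) := by
    rw [hMbinv]
    exact dotProduct_submatrix_mulVec_le (dotProduct_blockDiagonal_mulVec_le hmB) _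
  replace hAt : At = (blockDiagonal fun _ => L)ᵀ * Mb⁻¹ * blockDiagonal fun _ => L := by
    rw [hKt, hAt, kronecker_one]
  refine ⟨hAt ▸ hPpd.posSemidef.conjTranspose_mul_mul_same _, fun x => ?_, fun x => ?_⟩
  · rw [hAt, hPpd.transpose_mul_mul_same_mulVec_eq_zero_iff, blockDiagonal_mulVec_eq_zero_iff,
      hLa]
    simp only [weightedLaplacian_mulVec_eq_zero_iff ha hnn hconn, funext_iff, Classical.skolem,
      Prod.forall]
    exact exists_congr fun v => forall_comm
  · rw [hAt]
    exact hPpd.posSemidef.dotProduct_transpose_mul_mul_mulVec_le hPm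
      (blockDiagonal_mulVec_dotProduct_self_le fun _ =>
        hLpsd.mulVec_dotProduct_mulVec_self_le hσN) x
end

section
/- Under the hypotheses of the previous dual ascent iteration with λ_{i,0} = 0 for all i, the limit of λ_l equals (Ū Λ̄⁻¹ Ūᵀ ⊗ Iₙ)b, i.e., the unique dual solution orthogonal to the kernel of L̄, where L = U diag(0, Λ̄) Uᵀ with U = [U₁ Ū] orthonormal and b = c − Mξ* projected appropriately. -/
/-!
Write `e_l = λ_l - λ*`. The iteration becomes `e_{l+1} = (I - α A) e_l` with `A = L̄ M̄⁻¹ L̄`,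
which is symmetric positive semidefinite with spectrum in `[0, σ_N² m_B]`; the step-size bound
makes `|1 - α μ| < 1` for every nonzero eigenvalue `μ`. In an eigenbasis of `A` the components of
`e_l` along `ker A` are frozen while the others decay geometrically, so `λ_l` tends to `λ*` plus
the projection of `e_0 = -λ*` onto `ker A = ker L̄`: the solution of `L̄ λ = c - M̄ ξ*` orthogonal
to `ker L̄`.
-/

open Matrix Kronecker Filter Topology

theorem tendsto_one_sub_pow_mul {t : ℝ} (h0 : 0 ≤ t) (h2 : t < 2) (c : ℝ) :
    Tendsto (fun l : ℕ => (1 - t) ^ l * c) atTop (𝓝 (if t = 0 then c else 0)) := by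
  rcases h0.eq_or_lt with rfl | hpos
  · simp
  · rw [if_neg hpos.ne']
    simpa using (tendsto_pow_atTop_nhds_zero_of_abs_lt_one
      (abs_lt.mpr ⟨by linarith, by linarith⟩)).mul_const c

namespace Matrix

section

variable {ι : Type*} [Fintype ι]

theorem PosSemidef.mulVec_dotProduct_mulVec_le {B : Matrix ι ι ℝ} (hB : B.PosSemidef) {s : ℝ}
    (hs : ∀ x, x ⬝ᵥ B *ᵥ x ≤ s * (x ⬝ᵥ x)) (x : ι → ℝ) :
    (B *ᵥ x) ⬝ᵥ (B *ᵥ x) ≤ s ^ 2 * (x ⬝ᵥ x) := by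
  classical
  have hBsymm := isHermitian_iff_isSymm.mp hB.1
  have hq : 0 ≤ x ⬝ᵥ B *ᵥ x := by simpa using hB.dotProduct_mulVec_nonneg x
  have hself : x ⬝ᵥ B *ᵥ (B *ᵥ x) = (B *ᵥ x) ⬝ᵥ (B *ᵥ x) := by
    rw [dotProduct_mulVec, ← mulVec_transpose, hBsymm.eq]
  -- Cauchy–Schwarz for the semi-inner product `B`, applied to `x` and `B x`
  have hCS : ((B *ᵥ x) ⬝ᵥ (B *ᵥ x)) ^ 2 ≤ (x ⬝ᵥ B *ᵥ x) * ((B *ᵥ x) ⬝ᵥ B *ᵥ (B *ᵥ x)) := by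
    simpa only [toBilin'_apply', hself] using B.toBilin'.apply_sq_le_of_symm
      (by simpa [toBilin'_apply'] using hB.dotProduct_mulVec_nonneg)
      (LinearMap.BilinForm.isSymm_iff.mp (isSymm_toBilin'_iff_isSymm.mpr hBsymm)) x (B *ᵥ x)
  have hself_nonneg (u : ι → ℝ) : 0 ≤ u ⬝ᵥ u := Finset.sum_nonneg fun _ _ => mul_self_nonneg _
  rcases (hself_nonneg (B *ᵥ x)).eq_or_lt with h0 | hpos
  · rw [← h0]
    exact mul_nonneg (sq_nonneg s) (hself_nonneg x)
  have hle : (B *ᵥ x) ⬝ᵥ (B *ᵥ x) ≤ s * (x ⬝ᵥ B *ᵥ x) :=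
    le_of_mul_le_mul_right (by nlinarith [mul_le_mul_of_nonneg_left (hs (B *ᵥ x)) hq]) hpos
  have hs0 : 0 ≤ s := (pos_of_mul_pos_left (hpos.trans_le hle) hq).le
  calc (B *ᵥ x) ⬝ᵥ (B *ᵥ x) ≤ s * (x ⬝ᵥ B *ᵥ x) := hle
  _ ≤ s * (s * (x ⬝ᵥ x)) := mul_le_mul_of_nonneg_left (hs x) hs0
  _ = s ^ 2 * (x ⬝ᵥ x) := by ring

theorem PosSemidef.dotProduct_mul_mul_mulVec_le {P B : Matrix ι ι ℝ} (hB : B.PosSemidef)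
    {p s : ℝ} (hp : 0 ≤ p) (hP : ∀ x, x ⬝ᵥ P *ᵥ x ≤ p * (x ⬝ᵥ x))
    (hs : ∀ x, x ⬝ᵥ B *ᵥ x ≤ s * (x ⬝ᵥ x)) (x : ι → ℝ) :
    x ⬝ᵥ (B * P * B) *ᵥ x ≤ s ^ 2 * p * (x ⬝ᵥ x) := by
  calc x ⬝ᵥ (B * P * B) *ᵥ x = (B *ᵥ x) ⬝ᵥ P *ᵥ (B *ᵥ x) := by
        rw [← mulVec_mulVec, ← mulVec_mulVec, dotProduct_mulVec, ← mulVec_transpose,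
          (isHermitian_iff_isSymm.mp hB.1).eq]
  _ ≤ p * ((B *ᵥ x) ⬝ᵥ (B *ᵥ x)) := hP _
  _ ≤ p * (s ^ 2 * (x ⬝ᵥ x)) := mul_le_mul_of_nonneg_left (hB.mulVec_dotProduct_mulVec_le hs x) hp
  _ = s ^ 2 * p * (x ⬝ᵥ x) := by ring

theorem posDef_of_blockDiag {m n : Type*} [Fintype m] [Fintype n] [DecidableEq m]
    {M : m → Matrix n n ℝ} (hM : ∀ i, (M i).PosDef) {Mb : Matrix (m × n) (m × n) ℝ}
    (hMb : ∀ p q, Mb p q = if p.1 = q.1 then M p.1 p.2 q.2 else 0) : Mb.PosDef := by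
  have hquad : ∀ x : m × n → ℝ,
      x ⬝ᵥ Mb *ᵥ x = ∑ i, (fun j => x (i, j)) ⬝ᵥ M i *ᵥ fun j => x (i, j) := by
    intro x
    simp [dotProduct, mulVec, hMb, Fintype.sum_prod_type]
  have hH : Mb.IsHermitian := by
    ext ⟨i, a⟩ ⟨j, b⟩
    simp only [conjTranspose_apply, star_trivial, hMb]
    by_cases h : i = j
    · subst h
      simpa using (hM i).1.apply a b
    · rw [if_neg h, if_neg (Ne.symm h)]
  refine PosDef.of_dotProduct_mulVec_pos hH fun x hx => ?_
  obtain ⟨p, hp⟩ := Function.ne_iff.mp hx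
  have hxp : (fun j => x (p.1, j)) ≠ 0 := fun h => hp (by simpa using congrFun h p.2)
  rw [star_trivial, hquad]
  refine Finset.sum_pos' (fun i _ => ?_) ⟨p.1, Finset.mem_univ _, ?_⟩
  · simpa using (hM i).posSemidef.dotProduct_mulVec_nonneg fun j => x (i, j)
  · simpa using (hM p.1).dotProduct_mulVec_pos hxp

theorem PosDef.conjTranspose_mul_mul_same_mulVec_eq_zero_iff {m n : Type*} [Fintype m]
    [Fintype n] {P : Matrix m m ℝ} (hP : P.PosDef) (B : Matrix m n ℝ) (v : n → ℝ) :
    (Bᴴ * P * B) *ᵥ v = 0 ↔ B *ᵥ v = 0 := by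
  refine ⟨fun h => ?_, fun h => by rw [← mulVec_mulVec, h, mulVec_zero]⟩
  by_contra hne
  have hpos := hP.dotProduct_mulVec_pos hne
  rw [star_mulVec, ← dotProduct_mulVec, mulVec_mulVec, mulVec_mulVec, h,
    dotProduct_zero] at hpos
  exact lt_irrefl _ hpos

theorem eq_of_mulVec_eq_of_forall_mulVec_eq_zero {m n : Type*} [Fintype m] [Fintype n]
    {B : Matrix m n ℝ} {x y : n → ℝ} (h : B *ᵥ x = B *ᵥ y)
    (hx : ∀ v, B *ᵥ v = 0 → x ⬝ᵥ v = 0) (hy : ∀ v, B *ᵥ v = 0 → y ⬝ᵥ v = 0) : x = y := by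
  have hker : B *ᵥ (x - y) = 0 := by rw [mulVec_sub, h, sub_self]
  rw [← sub_eq_zero, ← dotProduct_self_eq_zero, sub_dotProduct, hx _ hker, hy _ hker, sub_self]

end

section

variable {ι : Type*} [Fintype ι] [DecidableEq ι]

theorem IsHermitian.eigenvectorBasis_dotProduct_self {A : Matrix ι ι ℝ} (hA : A.IsHermitian)
    (i : ι) : ⇑(hA.eigenvectorBasis i) ⬝ᵥ ⇑(hA.eigenvectorBasis i) = 1 := by
  have h := orthonormal_iff_ite.mp hA.eigenvectorBasis.orthonormal i i
  rw [if_pos rfl, EuclideanSpace.inner_eq_star_dotProduct] at h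
  simpa using h

theorem IsHermitian.hasEigenvalue_eigenvalues {A : Matrix ι ι ℝ} (hA : A.IsHermitian) (i : ι) :
    Module.End.HasEigenvalue (toLin' A) (hA.eigenvalues i) := by
  refine Module.End.hasEigenvalue_of_hasEigenvector (x := ⇑(hA.eigenvectorBasis i)) ⟨?_, ?_⟩
  · rw [Module.End.mem_eigenspace_iff, toLin'_apply, hA.mulVec_eigenvectorBasis]
  · simpa using hA.eigenvectorBasis.orthonormal.ne_zero i

theorem IsHermitian.eigenvalues_le {A : Matrix ι ι ℝ} (hA : A.IsHermitian) {β : ℝ}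
    (hβ : ∀ x, x ⬝ᵥ A *ᵥ x ≤ β * (x ⬝ᵥ x)) (i : ι) : hA.eigenvalues i ≤ β := by
  have := hβ (hA.eigenvectorBasis i)
  rwa [hA.mulVec_eigenvectorBasis, dotProduct_smul, hA.eigenvectorBasis_dotProduct_self,
    smul_eq_mul, mul_one, mul_one] at this

theorem IsHermitian.star_eigenvectorUnitary_mulVec_mulVec {A : Matrix ι ι ℝ}
    (hA : A.IsHermitian) (x : ι → ℝ) :
    star (hA.eigenvectorUnitary : Matrix ι ι ℝ) *ᵥ (A *ᵥ x) =
      hA.eigenvalues * (star (hA.eigenvectorUnitary : Matrix ι ι ℝ) *ᵥ x) := by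
  set U : Matrix ι ι ℝ := ↑hA.eigenvectorUnitary
  have hdiag : star U * A * U = diagonal hA.eigenvalues := by
    simpa [Unitary.conjStarAlgAut_star_apply] using hA.conjStarAlgAut_star_eigenvectorUnitary
  have : star U * A = diagonal hA.eigenvalues * star U := by
    rw [← hdiag, Matrix.mul_assoc _ U, Unitary.mul_star_self_of_mem hA.eigenvectorUnitary.2,
      Matrix.mul_one]
  ext k
  rw [mulVec_mulVec, this, ← mulVec_mulVec, mulVec_diagonal, Pi.mul_apply]

theorem IsHermitian.posSemidef_of_sum_abs_le_diag {A : Matrix ι ι ℝ} (hA : A.IsHermitian)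
    (hdom : ∀ k, ∑ j ∈ Finset.univ.erase k, |A k j| ≤ A k k) : A.PosSemidef := by
  refine hA.posSemidef_iff_eigenvalues_nonneg.mpr fun i => ?_
  obtain ⟨k, hk⟩ := eigenvalue_mem_ball (hA.hasEigenvalue_eigenvalues i)
  rw [Metric.mem_closedBall, Real.dist_eq] at hk
  simp only [Real.norm_eq_abs] at hk
  have := hdom k
  simp only [Pi.zero_apply]
  linarith [(abs_le.mp hk).1]

theorem posSemidef_of_laplacian {a L : Matrix ι ι ℝ} (hsym : ∀ i j, a i j = a j i)
    (hnn : ∀ i j, 0 ≤ a i j) (hL : ∀ i j, L i j = if i = j then ∑ k, a i k else -(a i j)) :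
    L.PosSemidef := by
  have hH : L.IsHermitian := by
    ext i j
    simp only [conjTranspose_apply, star_trivial, hL]
    by_cases h : i = j
    · subst h; rfl
    · rw [if_neg h, if_neg (Ne.symm h), hsym]
  refine hH.posSemidef_of_sum_abs_le_diag fun k => ?_
  calc ∑ j ∈ Finset.univ.erase k, |L k j| = ∑ j ∈ Finset.univ.erase k, a k j :=
        Finset.sum_congr rfl fun j hj => by
          rw [hL, if_neg (Finset.ne_of_mem_erase hj).symm, abs_neg, abs_of_nonneg (hnn k j)]
    _ ≤ ∑ j, a k j := Finset.sum_le_univ_sum_of_nonneg (hnn k)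
    _ = L k k := by rw [hL, if_pos rfl]

theorem IsHermitian.posSemidef_smul_one_sub_iff {B : Matrix ι ι ℝ} (hB : B.IsHermitian) (s : ℝ) :
    (s • 1 - B).PosSemidef ↔ ∀ x, x ⬝ᵥ B *ᵥ x ≤ s * (x ⬝ᵥ x) := by
  have hH : (s • 1 - B).IsHermitian := (isHermitian_one.smul (IsSelfAdjoint.all s)).sub hB
  simp only [posSemidef_iff_dotProduct_mulVec, hH, true_and, star_trivial, sub_mulVec,
    smul_mulVec, one_mulVec, dotProduct_sub, dotProduct_smul, smul_eq_mul, sub_nonneg]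

theorem IsHermitian.dotProduct_kronecker_one_mulVec_le {κ : Type*} [Fintype κ]
    [DecidableEq κ] {B : Matrix ι ι ℝ} (hB : B.IsHermitian) {s : ℝ}
    (hs : ∀ x, x ⬝ᵥ B *ᵥ x ≤ s * (x ⬝ᵥ x))
    (x : ι × κ → ℝ) : x ⬝ᵥ (B ⊗ₖ (1 : Matrix κ κ ℝ)) *ᵥ x ≤ s * (x ⬝ᵥ x) := by
  have hBI : (B ⊗ₖ (1 : Matrix κ κ ℝ)).IsHermitian := by
    rw [IsHermitian, conjTranspose_kronecker, hB.eq, conjTranspose_one]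
  have hsplit : (s • 1 - B) ⊗ₖ (1 : Matrix κ κ ℝ) = s • 1 - B ⊗ₖ 1 := by
    rw [eq_sub_iff_add_eq, ← add_kronecker, sub_add_cancel, smul_kronecker, one_kronecker_one]
  have h := ((hB.posSemidef_smul_one_sub_iff s).mpr hs).kronecker
    (PosSemidef.one (n := κ))
  rw [hsplit, hBI.posSemidef_smul_one_sub_iff] at h
  exact h x

theorem PosSemidef.exists_tendsto_richardson {A : Matrix ι ι ℝ} (hA : A.PosSemidef) {α β : ℝ}
    (hα : 0 < α) (hβ : ∀ x, x ⬝ᵥ A *ᵥ x ≤ β * (x ⬝ᵥ x)) (hαβ : α * β < 2)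
    {e : ℕ → ι → ℝ} (he : ∀ l, e (l + 1) = e l - α • (A *ᵥ e l)) :
    ∃ y, Tendsto e atTop (𝓝 y) ∧ A *ᵥ y = 0 ∧ ∀ v, A *ᵥ v = 0 → (e 0 - y) ⬝ᵥ v = 0 := by
  have hμ_nonneg := hA.eigenvalues_nonneg
  have hμ_le := hA.1.eigenvalues_le hβ
  have hcoord := hA.1.star_eigenvectorUnitary_mulVec_mulVec
  have hU := Unitary.mul_star_self_of_mem hA.1.eigenvectorUnitary.2
  have hU' := Unitary.star_mul_self_of_mem hA.1.eigenvectorUnitary.2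
  generalize hA.1.eigenvalues = μ at hμ_nonneg hμ_le hcoord
  generalize (hA.1.eigenvectorUnitary : Matrix ι ι ℝ) = U at hcoord hU hU'
  -- `z l` holds the coordinates of `e l` in an orthonormal eigenbasis of `A`
  set z : ℕ → ι → ℝ := fun l => star U *ᵥ e l
  have hz : ∀ l k, z l k = (1 - α * μ k) ^ l * z 0 k := by
    intro l k
    induction l with
    | zero => simp
    | succ l ih =>
      simp only [z, he, mulVec_sub, mulVec_smul, hcoord] at ih ⊢
      simp only [Pi.sub_apply, Pi.smul_apply, Pi.mul_apply, smul_eq_mul, ih, pow_succ]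
      ring
  set zlim : ι → ℝ := fun k => if μ k = 0 then z 0 k else 0
  have hz_tendsto : Tendsto z atTop (𝓝 zlim) := by
    refine tendsto_pi_nhds.mpr fun k => ?_
    rw [show (fun l => z l k) = fun l => (1 - α * μ k) ^ l * z 0 k from funext (hz · k)]
    simpa only [mul_eq_zero, hα.ne', false_or] using tendsto_one_sub_pow_mul
      (mul_nonneg hα.le (hμ_nonneg k))
      ((mul_le_mul_of_nonneg_left (hμ_le k) hα.le).trans_lt hαβ) (z 0 k)
  have he_eq : ∀ l, e l = U *ᵥ z l := fun l => by
    rw [mulVec_mulVec, hU, one_mulVec]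
  refine ⟨U *ᵥ zlim, ?_, ?_, ?_⟩
  · exact (tendsto_congr he_eq).mpr <|
      ((continuous_const.matrix_mulVec continuous_id).tendsto _).comp hz_tendsto
  · have hμz : μ * zlim = 0 := by
      ext k
      by_cases hk : μ k = 0 <;> simp [zlim, hk]
    rw [← one_mulVec (A *ᵥ _), ← hU, ← mulVec_mulVec, hcoord, mulVec_mulVec _ _ U, hU',
      one_mulVec, hμz, mulVec_zero]
  · intro v hv
    have hw : μ * (star U *ᵥ v) = 0 := by rw [← hcoord, hv, mulVec_zero]
    rw [he_eq 0, ← mulVec_sub, dotProduct_comm, dotProduct_mulVec, ← mulVec_transpose,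
      ← conjTranspose_eq_transpose_of_trivial, ← star_eq_conjTranspose]
    refine Finset.sum_eq_zero fun k _ => ?_
    by_cases hk : μ k = 0
    · simp [zlim, hk]
    · have hwk : (star U *ᵥ v) k = 0 := by simpa [hk] using congrFun hw k
      rw [hwk, zero_mul]

end

end Matrix

theorem dualAscent_sub_succ {ι : Type*} [Fintype ι] [DecidableEq ι] {Mb Lb : Matrix ι ι ℝ}
    (hMb : IsUnit Mb) {c ξs lams : ι → ℝ} {α : ℝ} {ξ lam : ℕ → ι → ℝ}
    (hiter1 : ∀ l, ξ (l + 1) = Mb⁻¹ *ᵥ (c - Lb *ᵥ lam l))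
    (hiter2 : ∀ l, lam (l + 1) = lam l + α • (Lb *ᵥ ξ (l + 1)))
    (hKKT1 : Mb *ᵥ ξs + Lb *ᵥ lams = c) (hKKT2 : Lb *ᵥ ξs = 0) (l : ℕ) :
    lam (l + 1) - lams = lam l - lams - α • ((Lb * Mb⁻¹ * Lb) *ᵥ (lam l - lams)) := by
  have hinv : Mb⁻¹ *ᵥ (Mb *ᵥ ξs) = ξs := by
    rw [mulVec_mulVec, nonsing_inv_mul _ ((isUnit_iff_isUnit_det Mb).mp hMb), one_mulVec]
  rw [hiter2, hiter1, ← hKKT1]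
  simp only [← mulVec_mulVec, mulVec_add, mulVec_sub, hinv, hKKT2]
  module

theorem dual_ascent_zero_init_limit_general {N n : ℕ}
    (a L : Matrix (Fin N) (Fin N) ℝ)
    (hsym : ∀ i j, a i j = a j i)
    (hnn : ∀ i j, 0 ≤ a i j)
    (hL : ∀ i j, L i j = if i = j then ∑ k, a i k else -(a i j))
    (σN : ℝ) (hσN : ∀ x : Fin N → ℝ, x ⬝ᵥ (L *ᵥ x) ≤ σN * (x ⬝ᵥ x))
    (M : Fin N → Matrix (Fin n) (Fin n) ℝ) (hM : ∀ i, (M i).PosDef)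
    (Mb : Matrix (Fin N × Fin n) (Fin N × Fin n) ℝ)
    (hMb : ∀ p q, Mb p q = if p.1 = q.1 then M p.1 p.2 q.2 else 0)
    (mB : ℝ) (hmB : ∀ x : Fin N × Fin n → ℝ, x ⬝ᵥ (Mb⁻¹ *ᵥ x) ≤ mB * (x ⬝ᵥ x))
    (Lb : Matrix (Fin N × Fin n) (Fin N × Fin n) ℝ)
    (hLb : Lb = L ⊗ₖ (1 : Matrix (Fin n) (Fin n) ℝ))
    (c : Fin N × Fin n → ℝ)
    (α : ℝ) (hα : 0 < α) (hαstep : α < 2 / (σN ^ 2 * mB))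
    (ξ lam : ℕ → Fin N × Fin n → ℝ)
    (hiter1 : ∀ l, ξ (l + 1) = Mb⁻¹ *ᵥ (c - Lb *ᵥ lam l))
    (hiter2 : ∀ l, lam (l + 1) = lam l + α • (Lb *ᵥ ξ (l + 1)))
    (hlam0 : lam 0 = 0)
    (ξs lams : Fin N × Fin n → ℝ)
    (hKKT1 : Mb *ᵥ ξs + Lb *ᵥ lams = c)
    (hKKT2 : Lb *ᵥ ξs = 0) :
    ∃ linf : Fin N × Fin n → ℝ,
      Filter.Tendsto lam Filter.atTop (nhds linf) ∧
      Lb *ᵥ linf = c - Mb *ᵥ ξs ∧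
      (∀ v : Fin N × Fin n → ℝ, Lb *ᵥ v = 0 → linf ⬝ᵥ v = 0) ∧
      (∀ l' : Fin N × Fin n → ℝ,
        Lb *ᵥ l' = c - Mb *ᵥ ξs → (∀ v, Lb *ᵥ v = 0 → l' ⬝ᵥ v = 0) → l' = linf) := by
  have hLpsd := posSemidef_of_laplacian hsym hnn hL
  have hLbpsd : Lb.PosSemidef := hLb ▸ hLpsd.kronecker PosSemidef.one
  have hLbσ : ∀ x, x ⬝ᵥ Lb *ᵥ x ≤ σN * (x ⬝ᵥ x) :=
    hLb ▸ hLpsd.1.dotProduct_kronecker_one_mulVec_le hσN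
  have hMbpd := posDef_of_blockDiag hM hMb
  have hA : (Lb * Mb⁻¹ * Lb).PosSemidef := by
    simpa only [hLbpsd.1.eq] using hMbpd.inv.posSemidef.conjTranspose_mul_mul_same Lb
  have hker : ∀ v, (Lb * Mb⁻¹ * Lb) *ᵥ v = 0 ↔ Lb *ᵥ v = 0 := by
    simpa only [hLbpsd.1.eq] using hMbpd.inv.conjTranspose_mul_mul_same_mulVec_eq_zero_iff Lb
  have hβ : 0 < σN ^ 2 * mB := (div_pos_iff_of_pos_left two_pos).mp (hα.trans hαstep)
  have hmB0 : 0 ≤ mB := (pos_of_mul_pos_right hβ (sq_nonneg σN)).le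
  obtain ⟨y, hy, hAy, hperp⟩ := hA.exists_tendsto_richardson (e := fun l => lam l - lams) hα
    (hLbpsd.dotProduct_mul_mul_mulVec_le hmB0 hmB hLbσ) ((lt_div_iff₀ hβ).mp hαstep)
    (dualAscent_sub_succ hMbpd.isUnit hiter1 hiter2 hKKT1 hKKT2)
  have hLbsol : Lb *ᵥ (lams + y) = c - Mb *ᵥ ξs := by
    rw [mulVec_add, (hker y).mp hAy, add_zero, ← hKKT1, add_sub_cancel_left]
  have hperp' : ∀ v, Lb *ᵥ v = 0 → (lams + y) ⬝ᵥ v = 0 := fun v hv => by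
    have h := hperp v ((hker v).mpr hv)
    simp only [hlam0, zero_sub, sub_dotProduct, neg_dotProduct, add_dotProduct] at h ⊢
    linarith
  refine ⟨lams + y, ?_, hLbsol, hperp', fun l' hl' hperpl' => ?_⟩
  · exact (hy.const_add lams).congr fun l => add_sub_cancel lams (lam l)
  · exact eq_of_mulVec_eq_of_forall_mulVec_eq_zero (hl'.trans hLbsol.symm) hperpl' hperp'

/-- With zero initialization `λ₀ = 0`, the dual ascent iterates `λ_l` converge to the
unique dual solution orthogonal to the kernel of `L̄ = L ⊗ Iₙ` (equivalently,
`(ŪΛ̄⁻¹Ūᵀ ⊗ Iₙ)b` where `b = c − Mξ*`). -/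
theorem dual_ascent_zero_init_limit {N n : ℕ} (hN : 0 < N)
    (a L : Matrix (Fin N) (Fin N) ℝ)
    (hsym : ∀ i j, a i j = a j i)
    (hnn : ∀ i j, 0 ≤ a i j)
    (hdiag : ∀ i, a i i = 0)
    (hconn : ∀ i j : Fin N, Relation.ReflTransGen (fun p q => 0 < a p q) i j)
    (hL : ∀ i j, L i j = if i = j then ∑ k, a i k else -(a i j))
    (σN : ℝ) (hσN : ∀ x : Fin N → ℝ, x ⬝ᵥ (L *ᵥ x) ≤ σN * (x ⬝ᵥ x)) (hσpos : 0 < σN)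
    (M : Fin N → Matrix (Fin n) (Fin n) ℝ) (hM : ∀ i, (M i).PosDef)
    (Mb : Matrix (Fin N × Fin n) (Fin N × Fin n) ℝ)
    (hMb : ∀ p q, Mb p q = if p.1 = q.1 then M p.1 p.2 q.2 else 0)
    (mB : ℝ) (hmB : ∀ x : Fin N × Fin n → ℝ, x ⬝ᵥ (Mb⁻¹ *ᵥ x) ≤ mB * (x ⬝ᵥ x))
    (hmBpos : 0 < mB)
    (Lb : Matrix (Fin N × Fin n) (Fin N × Fin n) ℝ)
    (hLb : Lb = L ⊗ₖ (1 : Matrix (Fin n) (Fin n) ℝ))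
    (c : Fin N × Fin n → ℝ)
    (α : ℝ) (hα : 0 < α) (hαstep : α < 2 / (σN ^ 2 * mB))
    (ξ lam : ℕ → Fin N × Fin n → ℝ)
    (hiter1 : ∀ l, ξ (l + 1) = Mb⁻¹ *ᵥ (c - Lb *ᵥ lam l))
    (hiter2 : ∀ l, lam (l + 1) = lam l + α • (Lb *ᵥ ξ (l + 1)))
    (hlam0 : lam 0 = 0)
    (ξs lams : Fin N × Fin n → ℝ)
    (hKKT1 : Mb *ᵥ ξs + Lb *ᵥ lams = c)
    (hKKT2 : Lb *ᵥ ξs = 0) :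
    ∃ linf : Fin N × Fin n → ℝ,
      Filter.Tendsto lam Filter.atTop (nhds linf) ∧
      Lb *ᵥ linf = c - Mb *ᵥ ξs ∧
      (∀ v : Fin N × Fin n → ℝ, Lb *ᵥ v = 0 → linf ⬝ᵥ v = 0) ∧
      (∀ l' : Fin N × Fin n → ℝ,
        Lb *ᵥ l' = c - Mb *ᵥ ξs → (∀ v, Lb *ᵥ v = 0 → l' ⬝ᵥ v = 0) → l' = linf) :=
  dual_ascent_zero_init_limit_general a L hsym hnn hL σN hσN M hM Mb hMb mB hmB Lb hLb c α hα hαstep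
    ξ lam hiter1 hiter2 hlam0 ξs lams hKKT1 hKKT2
end
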